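/- The quotient Σ(n,p)/R(n,p) of the p-modular descent algebra by its Jacobson radical is commutative; equivalently, for all x, y ∈ Σ(n,p), the commutator xy − yx lies in R(n,p). -/

import Mathlib

/-
`B̄_q` is the sum of `Tuple.sort f` over the colourings `f : Fin n → Fin ℓ(q)` with fibre sizes `q`.
Pairing colourings gives Solomon's Mackey formula `B̄_q B̄_r = ∑_{Z ∈ S(r,q)} B̄_{w(Z)}`. Transposing
`Z` matches its terms with those of `B̄_r B̄_q`, and matched compositions are rearrangements of each
other, so every commutator lies in the span `T₁` of the differences `B̄_a - B̄_b` with `a` a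
rearrangement of `b`. Let `T_m` be the span of those differences in which `b` has at least `m`
parts. The formula also gives `Σ T₁ ⊆ T₁` and `(B̄_a - B̄_b) B̄_r ∈ T_{ℓ(r)+1}`, hence
`T₁ T_m ⊆ T_{m+1}`, while `T_{n+1} = 0`. So `c z` is nilpotent for every commutator `z` and every
`c ∈ Σ(n,p)`, which puts `z` in the Jacobson radical.
-/

open scoped Classical

set_option synthInstance.maxHeartbeats 1000000
set_option maxHeartbeats 1000000

noncomputable section

/-- The group algebra `F_p[S_n]`. -/
abbrev GroupAlg (n p : ℕ) : Type := MonoidAlgebra (ZMod p) (Equiv.Perm (Fin n))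

/-- The descent set of a permutation `σ` of `{1,…,n}` (1-based positions):
`k ∈ {1,…,n-1}` is a descent if `σ(k) > σ(k+1)`.  (With 0-based `Fin n` indices this
compares the images at indices `k-1` and `k`.) -/
def descSet {n : ℕ} (σ : Equiv.Perm (Fin n)) : Set ℕ :=
  {k | ∃ h : k < n, 0 < k ∧ σ ⟨k, h⟩ < σ ⟨k - 1, by omega⟩}

/-- The set of proper partial sums `{a_1, a_1+a_2, …, a_1+⋯+a_{s-1}}` of a composition. -/
def properPartialSums {n : ℕ} (q : Composition n) : Set ℕ :=
  {m | ∃ i : ℕ, 0 < i ∧ i < q.length ∧ m = q.sizeUpTo i}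

/-- `B̄_q`: the sum of all permutations whose descent set is contained in the set of
proper partial sums of `q`. -/
def Bel (n p : ℕ) (q : Composition n) : GroupAlg n p :=
  ∑ σ ∈ Finset.univ.filter
      (fun σ : Equiv.Perm (Fin n) => descSet σ ⊆ properPartialSums q),
    MonoidAlgebra.of (ZMod p) (Equiv.Perm (Fin n)) σ

/-- The p-modular descent algebra `Σ(n,p)`, as a subalgebra of the group algebra. -/
def descentAlgebra (n p : ℕ) : Subalgebra (ZMod p) (GroupAlg n p) :=
  Algebra.adjoin (ZMod p) (Set.range (Bel n p))

/-- `B̄_q` as an element of `Σ(n,p)`. -/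
def BelS (n p : ℕ) (q : Composition n) : descentAlgebra n p :=
  ⟨Bel n p q, Algebra.subset_adjoin ⟨q, rfl⟩⟩

/-- The Jacobson radical `R(n,p)` of `Σ(n,p)`. -/
def descentRadical (n p : ℕ) : Ideal (descentAlgebra n p) :=
  (⊥ : Ideal (descentAlgebra n p)).jacobson

/-- `R(n,p)` viewed as an `F_p`-subspace of the group algebra. -/
def descentRadicalSubmodule (n p : ℕ) : Submodule (ZMod p) (GroupAlg n p) :=
  Submodule.map (descentAlgebra n p).val.toLinearMap
    ((descentRadical n p).restrictScalars (ZMod p))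

/-- `Y_m`: the span of the `B̄_q` with `q` having at least `m` components. -/
def Ysub (n p m : ℕ) : Submodule (ZMod p) (GroupAlg n p) :=
  Submodule.span (ZMod p) {x | ∃ q : Composition n, m ≤ q.length ∧ x = Bel n p q}

/-- `T`: the span of all differences `B̄_q - B̄_r` with `q ≈ r`. -/
def Tsub (n p : ℕ) : Submodule (ZMod p) (GroupAlg n p) :=
  Submodule.span (ZMod p)
    {x | ∃ q r : Composition n, q.blocks.Perm r.blocks ∧ x = Bel n p q - Bel n p r}

/-- `g(n,p)`: the number of partitions of `n` with no part divisible by `p`. -/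
def gPart (n p : ℕ) : ℕ := Set.ncard {π : n.Partition | ∀ i ∈ π.parts, ¬ p ∣ i}

/-- `g(n,p)`: the number of conjugacy classes of `p`-regular elements of `S_n`. -/
def gReg (n p : ℕ) : ℕ :=
  Set.ncard {c : ConjClasses (Equiv.Perm (Fin n)) | ∀ σ ∈ c.carrier, (orderOf σ).Coprime p}

/-- The Young character `χ_q`: `χ_q(σ)` is the number of ordered set partitions
`(P_1,…,P_s)` of `{1,…,n}` with `|P_i| = a_i`, each of whose blocks is `σ`-invariant. -/
def youngChar {n : ℕ} (q : Composition n) (σ : Equiv.Perm (Fin n)) : ℕ :=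
  (Finset.univ.filter (fun P : Fin q.length → Finset (Fin n) =>
    (∀ i, (P i).card = q.blocksFun i) ∧
    (∀ i j, i ≠ j → Disjoint (P i) (P j)) ∧
    (∀ x, ∃ i, x ∈ P i) ∧
    (∀ i, ∀ x ∈ P i, σ x ∈ P i))).card

/-- `χ̃_q`: the Young character with values reduced mod `p`. -/
def youngCharMod (n p : ℕ) (q : Composition n) : Equiv.Perm (Fin n) → ZMod p :=
  fun σ => (youngChar q σ : ZMod p)

/-- `G(n,p)`: the span of the mod-`p` Young characters. -/
def Gnp (n p : ℕ) : Submodule (ZMod p) (Equiv.Perm (Fin n) → ZMod p) :=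
  Submodule.span (ZMod p) (Set.range (youngCharMod n p))

/-- `S(q,r)`: matrices with row sums `q` and column sums `r`. -/
def SMat {n : ℕ} (q r : Composition n) : Set (Matrix (Fin q.length) (Fin r.length) ℕ) :=
  {Z | (∀ i, ∑ j, Z i j = q.blocksFun i) ∧ (∀ j, ∑ i, Z i j = r.blocksFun j)}

/-- `w(Z)`: the list of nonzero entries of `Z` read row by row. -/
def wList {s t : ℕ} (Z : Matrix (Fin s) (Fin t) ℕ) : List ℕ :=
  ((List.finRange s).flatMap fun i => ((List.finRange t).map fun j => Z i j)).filter
    (fun x => x ≠ 0)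

/-- One merging step: replace two adjacent components by their sum. -/
def mergeStep (l l' : List ℕ) : Prop :=
  ∃ (u v : List ℕ) (a b : ℕ), l = u ++ a :: b :: v ∧ l' = u ++ (a + b) :: v

/-- `coarsens l l'` (`l ⪯ l'` on compositions): `l'` is obtained from `l` by repeatedly
replacing adjacent components by their sum. -/
def coarsens (l l' : List ℕ) : Prop := Relation.ReflTransGen mergeStep l l'


open Finset

theorem List.sum_filter_ne_zero {M : Type*} [AddMonoid M] [DecidableEq M] (l : List M) :
    (l.filter (· ≠ 0)).sum = l.sum := by
  induction l with
  | nil => rfl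
  | cons a l ih => by_cases ha : a = 0 <;> simp_all

theorem List.length_le_length_flatMap {α β : Type*} {l : List α} {f : α → List β}
    (hf : ∀ a ∈ l, f a ≠ []) : l.length ≤ (l.flatMap f).length := by
  induction l with
  | nil => simp
  | cons a l ih =>
    have := List.length_pos_iff.2 (hf a (List.mem_cons_self ..))
    simp only [List.flatMap_cons, List.length_append, List.length_cons]
    have := ih fun b hb => hf b (List.mem_cons_of_mem _ hb)
    omega

theorem List.length_eq_one_of_length_flatMap_eq {α β : Type*} {l : List α} {f : α → List β}
    (hf : ∀ a ∈ l, f a ≠ []) (h : (l.flatMap f).length = l.length) :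
    ∀ a ∈ l, (f a).length = 1 := by
  induction l with
  | nil => simp
  | cons a l ih =>
    have ha := List.length_pos_iff.2 (hf a (List.mem_cons_self ..))
    have hf' : ∀ b ∈ l, f b ≠ [] := fun b hb => hf b (List.mem_cons_of_mem _ hb)
    have hl := List.length_le_length_flatMap hf'
    simp only [List.flatMap_cons, List.length_append, List.length_cons] at h
    simp only [List.mem_cons, forall_eq_or_imp]
    exact ⟨by omega, ih hf' (by omega)⟩

theorem List.Perm.exists_equiv_get {α : Type*} [LinearOrder α] {l l' : List α} (h : l.Perm l') :
    ∃ e : Fin l'.length ≃ Fin l.length, ∀ i, l.get (e i) = l'.get i := by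
  have hsort (m : List α) : (List.ofFn (m.get ∘ Tuple.sort m.get)).Perm m := by
    simpa using (Tuple.sort m.get).ofFn_comp_perm m.get
  obtain ⟨hlen, hfun⟩ := Fin.sigma_eq_iff_eq_comp_cast.1 <| List.ofFn_inj'.1 <|
    ((hsort l).trans (h.trans (hsort l').symm)).eq_of_pairwise'
      (Tuple.monotone_sort _).sortedLE_ofFn.pairwise (Tuple.monotone_sort _).sortedLE_ofFn.pairwise
  refine ⟨(Tuple.sort l'.get).symm.trans ((finCongr hlen.symm).trans (Tuple.sort l.get)),
    fun i => ?_⟩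
  simpa using congrFun hfun (finCongr hlen.symm ((Tuple.sort l'.get).symm i))


section FiberCard

variable {ι L M : Type*} [Fintype ι]

def fiberCard (H : ι → L) (l : L) : ℕ := #{v | H v = l}

theorem fiberCard_comp_equiv {ι' : Type*} [Fintype ι'] (H : ι → L) (e : ι' ≃ ι) :
    fiberCard (H ∘ e) = fiberCard H :=
  funext fun _ => card_equiv e (by simp)

theorem fiberCard_comp_injective {f : L → M} (hf : f.Injective) (H : ι → L) (l : L) :
    fiberCard (f ∘ H) (f l) = fiberCard H l := by
  simp [fiberCard, hf.eq_iff]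

theorem fiberCard_eq_zero_iff {H : ι → L} {l : L} : fiberCard H l = 0 ↔ l ∉ Set.range H := by
  simp [fiberCard, filter_eq_empty_iff]

theorem sum_fiberCard_toLex_left {A B : Type*} [Fintype B] (H : ι → A ×ₗ B) (a : A) :
    ∑ b, fiberCard H (toLex (a, b)) = fiberCard (fun v => (ofLex (H v)).1) a := by
  rw [fiberCard, card_eq_sum_card_fiberwise (f := fun v => (ofLex (H v)).2) (t := univ)
    fun _ _ => mem_univ _]
  refine sum_congr rfl fun b _ => congrArg card ?_
  ext v
  simp [Prod.ext_iff, ← ofLex_inj (a := H v)]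

theorem sum_fiberCard_toLex_right {A B : Type*} [Fintype A] (H : ι → A ×ₗ B) (b : B) :
    ∑ a, fiberCard H (toLex (a, b)) = fiberCard (fun v => (ofLex (H v)).2) b := by
  rw [fiberCard, card_eq_sum_card_fiberwise (f := fun v => (ofLex (H v)).1) (t := univ)
    fun _ _ => mem_univ _]
  refine sum_congr rfl fun a _ => congrArg card ?_
  ext v
  simp [Prod.ext_iff, ← ofLex_inj (a := H v), and_comm]

end FiberCard

theorem Tuple.eq_of_monotone_of_fiberCard_eq {n : ℕ} {L : Type*} [LinearOrder L]
    {H₁ H₂ : Fin n → L} (h₁ : Monotone H₁) (h₂ : Monotone H₂)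
    (h : fiberCard H₁ = fiberCard H₂) : H₁ = H₂ := by
  have hperm : (List.ofFn H₁).Perm (List.ofFn H₂) := by
    rw [← Multiset.coe_eq_coe, ← Fin.univ_val_map, ← Fin.univ_val_map]
    ext l
    rw [Multiset.count_map, Multiset.count_map]
    simpa [fiberCard, Finset.card_def, Finset.filter_val, eq_comm] using congrFun h l
  exact List.ofFn_injective <|
    hperm.eq_of_pairwise' h₁.sortedLE_ofFn.pairwise h₂.sortedLE_ofFn.pairwise

theorem Tuple.lt_of_sort_eq {n : ℕ} {A : Type*} [LinearOrder A] (f : Fin n → A) {x y : Fin n}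
    (hxy : x < y) (h : f (Tuple.sort f x) = f (Tuple.sort f y)) :
    Tuple.sort f x < Tuple.sort f y :=
  (Tuple.eq_sort_iff.mp rfl).2 x y hxy h

theorem Tuple.sort_toLex {n : ℕ} {A B : Type*} [LinearOrder A] [LinearOrder B]
    (g : Fin n → A) (f : Fin n → B) :
    Tuple.sort (fun v => toLex (g v, f v)) = Tuple.sort f * Tuple.sort (g ∘ Tuple.sort f) := by
  refine (Tuple.eq_sort_iff.2 ⟨fun x y hxy => ?_, fun x y hxy h => ?_⟩).symm
  · simp only [Function.comp_apply, Equiv.Perm.mul_apply, Prod.Lex.toLex_le_toLex]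
    obtain rfl | hxy := hxy.eq_or_lt
    · exact Or.inr ⟨rfl, le_rfl⟩
    refine (Tuple.monotone_sort (g ∘ Tuple.sort f) hxy.le).lt_or_eq.imp id
      fun heq => ⟨heq, ?_⟩
    exact Tuple.monotone_sort f (Tuple.lt_of_sort_eq (g ∘ Tuple.sort f) hxy heq).le
  · simp only [Equiv.Perm.mul_apply, toLex_inj, Prod.ext_iff] at h ⊢
    exact Tuple.lt_of_sort_eq f (Tuple.lt_of_sort_eq (g ∘ Tuple.sort f) hxy h.1) h.2

namespace Composition

variable {n : ℕ} (c : Composition n)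

theorem index_eq_iff {j : Fin n} {i : Fin c.length} :
    c.index j = i ↔ c.sizeUpTo i ≤ j ∧ (j : ℕ) < c.sizeUpTo (i + 1) := by
  rw [eq_comm, ← mem_range_embedding_iff', mem_range_embedding_iff]

theorem index_monotone : Monotone c.index := by
  intro a b hab
  by_contra! hlt
  have hb : (b : ℕ) < c.sizeUpTo (c.index b + 1) := c.lt_sizeUpTo_index_succ b
  have ha := c.sizeUpTo_index_le a
  have : c.sizeUpTo (c.index b + 1) ≤ c.sizeUpTo (c.index a) := c.monotone_sizeUpTo hlt
  have : (a : ℕ) ≤ b := hab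
  omega

theorem fiberCard_index : fiberCard c.index = c.blocksFun := by
  funext i
  rw [fiberCard, ← card_map Fin.valEmbedding]
  convert Nat.card_Ico (c.sizeUpTo i) (c.sizeUpTo (i + 1)) using 2
  · ext k
    simp only [mem_map, mem_filter, mem_univ, true_and, Fin.valEmbedding_apply, mem_Ico,
      c.index_eq_iff]
    exact ⟨by rintro ⟨j, hj, rfl⟩; exact hj,
      fun hk => ⟨⟨k, hk.2.trans_le (c.sizeUpTo_le _)⟩, hk, rfl⟩⟩
  · rw [c.sizeUpTo_succ' i]
    omega

theorem mem_properPartialSums_iff {k : ℕ} (h₀ : 0 < k) (h : k < n) :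
    k ∈ properPartialSums c ↔ c.index ⟨k - 1, by omega⟩ ≠ c.index ⟨k, h⟩ := by
  constructor
  · rintro ⟨i, hi₀, hi, rfl⟩ heq
    have hk : c.index ⟨c.sizeUpTo i, h⟩ = ⟨i, hi⟩ :=
      c.index_eq_iff.2 ⟨le_rfl, c.sizeUpTo_strict_mono hi⟩
    have hk' := (c.index_eq_iff.1 (heq.trans hk)).1
    simp only at hk'
    omega
  · intro hne
    set i := c.index ⟨k, h⟩ with hi
    have hik : c.sizeUpTo i ≤ k := (c.index_eq_iff.1 hi.symm).1
    have hki : k < c.sizeUpTo (i + 1) := (c.index_eq_iff.1 hi.symm).2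
    have hk : c.sizeUpTo i = k := by
      by_contra hk
      refine hne (c.index_eq_iff.2 ⟨?_, ?_⟩) <;> dsimp only <;> omega
    refine ⟨i, Nat.pos_of_ne_zero fun hi₀ => ?_, i.2, hk.symm⟩
    rw [hi₀, c.sizeUpTo_zero] at hk
    omega

end Composition

theorem descSet_subset_properPartialSums_iff {n : ℕ} (c : Composition n)
    (σ : Equiv.Perm (Fin n)) :
    descSet σ ⊆ properPartialSums c ↔
      ∀ v w, v < w → c.index v = c.index w → σ v < σ w := by
  constructor
  · intro hsub v w hvw hvw'
    -- the blocks of `c` are intervals, so it suffices to compare adjacent positions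
    have hblock : StrictMonoOn σ {u | c.index u = c.index w} := by
      refine strictMonoOn_of_lt_succ ⟨fun a ha b hb u hu => ?_⟩ fun a ha haw hsw => ?_
      · exact le_antisymm (hb ▸ c.index_monotone hu.2) (ha ▸ c.index_monotone hu.1)
      · set b := Order.succ a
        have hcov : (b : ℕ) = a + 1 :=
          (Nat.covBy_iff_add_one_eq.1 (Fin.covBy_iff.1 (Order.covBy_succ_of_not_isMax ha))).symm
        by_contra! hdesc
        have hmem : (b : ℕ) ∈ descSet σ := by
          refine ⟨b.2, by omega, lt_of_le_of_ne ?_ fun heq => ?_⟩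
          · convert hdesc using 2
            ext
            simp [hcov]
          · have := σ.injective heq
            simp [Fin.ext_iff] at this
            omega
        refine (c.mem_properPartialSums_iff (by omega) b.2).1 (hsub hmem) ?_
        convert haw.trans hsw.symm using 2
        ext
        simp [hcov]
    exact hblock hvw' rfl hvw
  · rintro hmono k ⟨h, h₀, hdesc⟩
    rw [c.mem_properPartialSums_iff h₀ h]
    exact fun heq => (hmono _ _ (Fin.mk_lt_mk.2 (by omega)) heq).asymm hdesc

section Colorings

variable {n : ℕ} {L : Type*} [LinearOrder L] {w : L → ℕ} {c : Composition n}
  {φ : Fin c.length → L}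

structure IsBlockEnumeration (w : L → ℕ) (c : Composition n) (φ : Fin c.length → L) :
    Prop where
  strictMono : StrictMono φ
  apply_eq : ∀ i, w (φ i) = c.blocksFun i
  mem_range : ∀ l, w l ≠ 0 → l ∈ Set.range φ

theorem IsBlockEnumeration.fiberCard_comp_index (hφ : IsBlockEnumeration w c φ) :
    fiberCard (φ ∘ c.index) = w := by
  funext l
  by_cases hl : l ∈ Set.range φ
  · obtain ⟨i, rfl⟩ := hl
    rw [fiberCard_comp_injective hφ.strictMono.injective, c.fiberCard_index, hφ.apply_eq]
  · rw [fiberCard_eq_zero_iff.2 fun ⟨v, hv⟩ => hl ⟨_, hv⟩]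
    exact (not_imp_comm.1 (hφ.mem_range l) hl).symm

variable [Fintype L]

def colorings (w : L → ℕ) : Finset (Fin n → L) := {H | fiberCard H = w}

theorem IsBlockEnumeration.comp_sort_eq (hφ : IsBlockEnumeration w c φ) {H : Fin n → L}
    (hH : H ∈ colorings w) : H ∘ Tuple.sort H = φ ∘ c.index :=
  Tuple.eq_of_monotone_of_fiberCard_eq (Tuple.monotone_sort H)
    (hφ.strictMono.monotone.comp c.index_monotone) <| by
      rw [fiberCard_comp_equiv, hφ.fiberCard_comp_index, (mem_filter.1 hH).2]

theorem IsBlockEnumeration.sum_of_sort_eq_bel (p : ℕ) (hφ : IsBlockEnumeration w c φ) :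
    ∑ H ∈ colorings w, MonoidAlgebra.of (ZMod p) _ (Tuple.sort H) = Bel n p c := by
  refine sum_nbij' Tuple.sort (fun σ => φ ∘ c.index ∘ σ.symm) (fun H hH => ?_)
    (fun σ hσ => ?_) (fun H hH => ?_) (fun σ hσ => ?_) fun _ _ => rfl
  · simp only [mem_filter, mem_univ, true_and, descSet_subset_properPartialSums_iff]
    intro v v' hvv' hidx
    have key := hφ.comp_sort_eq hH
    exact Tuple.lt_of_sort_eq H hvv' <|
      (congrFun key v).trans ((congrArg φ hidx).trans (congrFun key v').symm)
  · simp only [colorings, mem_filter, mem_univ, true_and]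
    rw [← Function.comp_assoc, fiberCard_comp_equiv, hφ.fiberCard_comp_index]
  · funext v
    simpa using congrFun (hφ.comp_sort_eq hH) ((Tuple.sort H).symm v) |>.symm
  · simp only [mem_filter, mem_univ, true_and,
      descSet_subset_properPartialSums_iff] at hσ
    refine (Tuple.eq_sort_iff.2 ⟨?_, fun v v' hvv' h => hσ v v' hvv' ?_⟩).symm
    · simpa [Function.comp_def] using hφ.strictMono.monotone.comp c.index_monotone
    · simpa using hφ.strictMono.injective (by simpa using h)

theorem bel_eq_sum_of_sort (p : ℕ) (c : Composition n) :
    Bel n p c = ∑ f ∈ colorings c.blocksFun, MonoidAlgebra.of (ZMod p) _ (Tuple.sort f) :=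
  (IsBlockEnumeration.sum_of_sort_eq_bel p
    ⟨strictMono_id, fun _ => rfl, fun l _ => ⟨l, rfl⟩⟩ : _ = Bel n p c).symm

end Colorings

section ReadingWords

variable {s t s' t' : ℕ}

theorem coe_wList (Z : Matrix (Fin s) (Fin t) ℕ) :
    (wList Z : Multiset ℕ) =
      (univ.val.map fun x : Fin s × Fin t => Z x.1 x.2).filter (· ≠ 0) := by
  rw [wList, ← Multiset.filter_coe, ← Finset.univ_product_univ, Finset.product_val,
    Fin.univ_def, Fin.univ_def, Multiset.coe_product, Multiset.map_coe]
  simp only [SProd.sprod, List.product, List.map_flatMap, List.map_map]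
  exact .refl _

theorem wList_perm_of_equiv {Z : Matrix (Fin s) (Fin t) ℕ} {Z' : Matrix (Fin s') (Fin t') ℕ}
    (e : Fin s' × Fin t' ≃ Fin s × Fin t) (he : ∀ x, Z' x.1 x.2 = Z (e x).1 (e x).2) :
    (wList Z').Perm (wList Z) := by
  rw [← Multiset.coe_eq_coe, coe_wList, coe_wList, ← Multiset.map_univ_val_equiv e,
    Multiset.map_map]
  simp only [Function.comp_def, he]

theorem wList_transpose_perm (Z : Matrix (Fin s) (Fin t) ℕ) :
    (wList Z.transpose).Perm (wList Z) :=
  wList_perm_of_equiv (Equiv.prodComm _ _) fun _ => rfl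

theorem wList_submatrix_perm (Z : Matrix (Fin s) (Fin t) ℕ) (e : Fin s' ≃ Fin s)
    (f : Fin t' ≃ Fin t) : (wList (Z.submatrix e f)).Perm (wList Z) :=
  wList_perm_of_equiv (Equiv.prodCongr e f) fun _ => rfl

def lexPositions (s t : ℕ) : List (Fin s ×ₗ Fin t) :=
  (List.finRange s).flatMap fun a => (List.finRange t).map fun b => toLex (a, b)

theorem pairwise_lt_lexPositions : (lexPositions s t).Pairwise (· < ·) := by
  refine List.pairwise_flatMap.2 ⟨fun a _ => ?_, (List.pairwise_lt_finRange s).imp ?_⟩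
  · exact (List.pairwise_lt_finRange t).map _
      fun _ _ h => Prod.Lex.toLex_lt_toLex.2 (.inr ⟨rfl, h⟩)
  · intro a a' h
    simp only [List.mem_map, List.mem_finRange, true_and, forall_exists_index]
    rintro _ b rfl _ b' rfl
    exact Prod.Lex.toLex_lt_toLex.2 (.inl h)

theorem mem_lexPositions (l : Fin s ×ₗ Fin t) : l ∈ lexPositions s t := by
  simp only [lexPositions, List.mem_flatMap, List.mem_finRange, List.mem_map, true_and]
  exact ⟨_, _, rfl⟩

def lexWeights (Z : Matrix (Fin s) (Fin t) ℕ) (l : Fin s ×ₗ Fin t) : ℕ :=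
  Z (ofLex l).1 (ofLex l).2

theorem wList_eq_map_filter (Z : Matrix (Fin s) (Fin t) ℕ) :
    wList Z = ((lexPositions s t).filter (lexWeights Z · ≠ 0)).map (lexWeights Z) := by
  have h := List.filter_map (f := lexWeights Z) (p := fun x => decide (x ≠ 0))
    (l := lexPositions s t)
  rw [Function.comp_def] at h
  rw [← h, lexPositions, List.map_flatMap]
  simp only [List.map_map]
  rfl

theorem sum_wList (Z : Matrix (Fin s) (Fin t) ℕ) : (wList Z).sum = ∑ a, ∑ b, Z a b := by
  rw [← Multiset.sum_coe, coe_wList, Multiset.filter_map, ← Finset.filter_val,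
    ← Finset.sum_eq_multiset_sum]
  exact (Finset.sum_filter_ne_zero _).trans (Fintype.sum_prod_type _)

/-- The junk value `Composition.ones n` is taken when the entries of `Z` do not sum to `n`. -/
def wComposition (n : ℕ) (Z : Matrix (Fin s) (Fin t) ℕ) : Composition n :=
  if h : (wList Z).sum = n then
    ⟨wList Z, fun hi => Nat.pos_of_ne_zero (by simpa using (List.mem_filter.1 hi).2), h⟩
  else Composition.ones n

variable {n : ℕ} {Z : Matrix (Fin s) (Fin t) ℕ}

theorem wComposition_blocks (h : (wList Z).sum = n) : (wComposition n Z).blocks = wList Z := by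
  rw [wComposition, dif_pos h]

theorem exists_isBlockEnumeration_wComposition (h : (wList Z).sum = n) :
    ∃ φ, IsBlockEnumeration (lexWeights Z) (wComposition n Z) φ := by
  set P := (lexPositions s t).filter (lexWeights Z · ≠ 0)
  have hblocks : (wComposition n Z).blocks = P.map (lexWeights Z) := by
    rw [wComposition_blocks h, wList_eq_map_filter]
  have hlen : (wComposition n Z).length = P.length := by
    rw [← Composition.blocks_length, hblocks, List.length_map]
  refine ⟨fun i => P.get (Fin.cast hlen i), fun i j hij => ?_, fun i => ?_, fun l hl => ?_⟩
  · exact List.pairwise_iff_get.1 (pairwise_lt_lexPositions.filter _) _ _ hij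
  · simp [Composition.blocksFun, hblocks]
  · have hlP : l ∈ P := List.mem_filter.2 ⟨mem_lexPositions l, decide_eq_true hl⟩
    obtain ⟨j, hj⟩ := List.mem_iff_get.1 hlP
    exact ⟨Fin.cast hlen.symm j, hj⟩

end ReadingWords

section SMat

variable {n : ℕ} {q r q' r' : Composition n}

theorem finite_SMat (q r : Composition n) : (SMat q r).Finite :=
  (Set.finite_Iic fun _ _ => n).subset fun _ hZ i j =>
    ((single_le_sum (fun _ _ => Nat.zero_le _) (mem_univ j)).trans (hZ.1 i).le).trans
      (q.blocksFun_le i)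

theorem transpose_mem_SMat_iff {Z : Matrix (Fin q.length) (Fin r.length) ℕ} :
    Z.transpose ∈ SMat r q ↔ Z ∈ SMat q r :=
  and_comm

theorem submatrix_mem_SMat_iff {Z : Matrix (Fin q.length) (Fin r.length) ℕ}
    (e : Fin q'.length ≃ Fin q.length) (he : ∀ i, q.blocksFun (e i) = q'.blocksFun i)
    (f : Fin r'.length ≃ Fin r.length) (hf : ∀ j, r.blocksFun (f j) = r'.blocksFun j) :
    Z.submatrix e f ∈ SMat q' r' ↔ Z ∈ SMat q r := by
  refine and_congr (e.forall_congr fun i => ?_) (f.forall_congr fun j => ?_)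
  · simp only [Matrix.submatrix_apply, ← he, Equiv.sum_comp f (Z (e i))]
  · simp only [Matrix.submatrix_apply, ← hf, Equiv.sum_comp e (fun i => Z i (f j))]

theorem Composition.exists_blocksFun_equiv_of_perm (h : q.blocks.Perm q'.blocks) :
    ∃ e : Fin q'.length ≃ Fin q.length, ∀ i, q.blocksFun (e i) = q'.blocksFun i :=
  h.exists_equiv_get

theorem sum_wList_of_mem_SMat {Z : Matrix (Fin q.length) (Fin r.length) ℕ} (hZ : Z ∈ SMat q r) :
    (wList Z).sum = n := by
  simp [sum_wList, hZ.1, q.sum_blocksFun]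

theorem wList_eq_flatMap_rows (Z : Matrix (Fin q.length) (Fin r.length) ℕ) :
    wList Z = (List.finRange q.length).flatMap
      fun a => ((List.finRange r.length).map (Z a)).filter (· ≠ 0) :=
  List.filter_flatMap

theorem sum_row_of_mem_SMat {Z : Matrix (Fin q.length) (Fin r.length) ℕ} (hZ : Z ∈ SMat q r)
    (a : Fin q.length) :
    (((List.finRange r.length).map (Z a)).filter (· ≠ 0)).sum = q.blocksFun a := by
  rw [List.sum_filter_ne_zero, ← List.ofFn_eq_map, List.sum_ofFn, hZ.1 a]

theorem row_ne_nil_of_mem_SMat {Z : Matrix (Fin q.length) (Fin r.length) ℕ} (hZ : Z ∈ SMat q r)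
    (a : Fin q.length) : ((List.finRange r.length).map (Z a)).filter (· ≠ 0) ≠ [] := by
  intro h
  have := sum_row_of_mem_SMat hZ a
  rw [h, List.sum_nil] at this
  have := q.one_le_blocksFun a
  omega

theorem length_le_length_wList {Z : Matrix (Fin q.length) (Fin r.length) ℕ}
    (hZ : Z ∈ SMat q r) : q.length ≤ (wList Z).length := by
  rw [wList_eq_flatMap_rows]
  exact (List.length_finRange (n := q.length)).symm.le.trans
    (List.length_le_length_flatMap fun a _ => row_ne_nil_of_mem_SMat hZ a)

theorem wList_eq_blocks_of_length_eq {Z : Matrix (Fin q.length) (Fin r.length) ℕ}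
    (hZ : Z ∈ SMat q r) (hlen : (wList Z).length = q.length) : wList Z = q.blocks := by
  rw [wList_eq_flatMap_rows] at hlen ⊢
  have hrow := List.length_eq_one_of_length_flatMap_eq (fun a _ => row_ne_nil_of_mem_SMat hZ a)
    (by rw [hlen, List.length_finRange])
  rw [← q.ofFn_blocksFun, List.ofFn_eq_map, ← List.flatMap_pure_eq_map]
  refine List.flatMap_congr fun a ha => ?_
  obtain ⟨x, hx⟩ := List.length_eq_one_iff.1 (hrow a ha)
  have := sum_row_of_mem_SMat hZ a
  rw [hx, List.sum_singleton] at this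
  rw [hx, this]
  rfl

theorem wComposition_eq_of_length_eq {Z : Matrix (Fin q.length) (Fin r.length) ℕ}
    (hZ : Z ∈ SMat q r) (hlen : (wList Z).length = q.length) : wComposition n Z = q :=
  Composition.ext <|
    (wComposition_blocks (sum_wList_of_mem_SMat hZ)).trans (wList_eq_blocks_of_length_eq hZ hlen)

end SMat

section Mackey

variable {n s t : ℕ} {q r : Composition n}

def fiberMatrix (H : Fin n → Fin s ×ₗ Fin t) : Matrix (Fin s) (Fin t) ℕ :=
  Matrix.of fun a b => fiberCard H (toLex (a, b))

theorem fiberMatrix_eq_iff {H : Fin n → Fin s ×ₗ Fin t} {Z : Matrix (Fin s) (Fin t) ℕ} :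
    fiberMatrix H = Z ↔ fiberCard H = lexWeights Z := by
  refine ⟨fun h => funext fun l => ?_, fun h => Matrix.ext fun a b => ?_⟩
  · simp [← h, fiberMatrix, lexWeights]
  · simp [fiberMatrix, h, lexWeights]

theorem fiberMatrix_mem_SMat_iff (H : Fin n → Fin q.length ×ₗ Fin r.length) :
    fiberMatrix H ∈ SMat q r ↔ fiberCard (fun v => (ofLex (H v)).1) = q.blocksFun ∧
      fiberCard (fun v => (ofLex (H v)).2) = r.blocksFun := by
  simp only [SMat, Set.mem_ofPred_eq, fiberMatrix, Matrix.of_apply, sum_fiberCard_toLex_left,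
    sum_fiberCard_toLex_right, funext_iff]

theorem sum_of_sort_eq_bel_wComposition (p : ℕ) {Z : Matrix (Fin q.length) (Fin r.length) ℕ}
    (hZ : Z ∈ SMat q r) :
    ∑ H ∈ colorings (lexWeights Z), MonoidAlgebra.of (ZMod p) _ (Tuple.sort H) =
      Bel n p (wComposition n Z) := by
  obtain ⟨φ, hφ⟩ := exists_isBlockEnumeration_wComposition (sum_wList_of_mem_SMat hZ)
  exact hφ.sum_of_sort_eq_bel p

/-- Solomon's Mackey formula. -/
theorem bel_mul_bel (p : ℕ) (q r : Composition n) :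
    Bel n p q * Bel n p r = ∑ Z ∈ (finite_SMat r q).toFinset, Bel n p (wComposition n Z) := by
  let of := MonoidAlgebra.of (ZMod p) (Equiv.Perm (Fin n))
  have hpair : ∀ f ∈ colorings q.blocksFun,
      ∑ g ∈ colorings r.blocksFun, of (Tuple.sort f) * of (Tuple.sort g) =
        ∑ g ∈ colorings r.blocksFun, of (Tuple.sort fun v => toLex (g v, f v)) := by
    intro f _
    refine sum_equiv ((Tuple.sort f).arrowCongr (Equiv.refl _)) (fun g => ?_) fun g _ => ?_
    · simp only [colorings, mem_filter, mem_univ, true_and]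
      change _ ↔ fiberCard (g ∘ (Tuple.sort f).symm) = _
      rw [fiberCard_comp_equiv]
    · simp [Tuple.sort_toLex, Function.comp_def, of]
  calc Bel n p q * Bel n p r
      = ∑ f ∈ colorings q.blocksFun, ∑ g ∈ colorings r.blocksFun,
          of (Tuple.sort f) * of (Tuple.sort g) := by
        rw [bel_eq_sum_of_sort p q, bel_eq_sum_of_sort p r, sum_mul_sum]
    _ = ∑ f ∈ colorings q.blocksFun, ∑ g ∈ colorings r.blocksFun,
          of (Tuple.sort fun v => toLex (g v, f v)) := sum_congr rfl hpair
    _ = ∑ H with fiberMatrix H ∈ SMat r q, of (Tuple.sort H) := by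
        rw [← sum_product']
        refine sum_nbij' (fun x v => toLex (x.2 v, x.1 v))
          (fun H => (fun v => (ofLex (H v)).2, fun v => (ofLex (H v)).1)) ?_ ?_
          (fun _ _ => rfl) (fun _ _ => rfl) (fun _ _ => rfl)
        all_goals simp [colorings, fiberMatrix_mem_SMat_iff, and_comm]
    _ = ∑ Z ∈ (finite_SMat r q).toFinset,
          ∑ H ∈ colorings (lexWeights Z), of (Tuple.sort H) := by
        rw [← sum_fiberwise_of_maps_to (g := fiberMatrix) (t := (finite_SMat r q).toFinset)
          fun H hH => by simpa using hH]
        refine sum_congr rfl fun Z hZ => sum_congr ?_ fun _ _ => rfl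
        ext H
        simp only [colorings, mem_filter, mem_univ, true_and, ← fiberMatrix_eq_iff]
        exact ⟨And.right, fun h => ⟨h ▸ (Set.Finite.mem_toFinset _).1 hZ, h⟩⟩
    _ = _ := sum_congr rfl fun Z hZ =>
        sum_of_sort_eq_bel_wComposition p ((Set.Finite.mem_toFinset _).1 hZ)

end Mackey

theorem Submodule.sum_sub_sum_mem {R M ι κ : Type*} [Ring R] [AddCommGroup M] [Module R M]
    {P : Submodule R M} {s : Finset ι} {t : Finset κ} {x : ι → M} {y : κ → M}
    (e : ι ≃ κ) (he : ∀ i, i ∈ s ↔ e i ∈ t) (h : ∀ i ∈ s, x i - y (e i) ∈ P) :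
    ∑ i ∈ s, x i - ∑ j ∈ t, y j ∈ P := by
  rw [← sum_equiv e he fun _ _ => rfl, ← sum_sub_distrib]
  exact P.sum_mem h

section Rearrangements

variable {n p : ℕ}

/-- For `m = 0` this is the space `Tsub n p`. -/
def rearrangementSpan (n p m : ℕ) : Submodule (ZMod p) (GroupAlg n p) :=
  Submodule.span (ZMod p)
    {x | ∃ q r : Composition n,
      q.blocks.Perm r.blocks ∧ m ≤ r.length ∧ x = Bel n p q - Bel n p r}

theorem bel_sub_bel_mem_rearrangementSpan {m : ℕ} {q r : Composition n}
    (h : q.blocks.Perm r.blocks) (hm : m ≤ r.length) :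
    Bel n p q - Bel n p r ∈ rearrangementSpan n p m :=
  Submodule.subset_span ⟨q, r, h, hm, rfl⟩

theorem rearrangementSpan_antitone : Antitone (rearrangementSpan n p) :=
  fun _ _ h => Submodule.span_mono fun _ ⟨q, r, hqr, hm, hx⟩ => ⟨q, r, hqr, h.trans hm, hx⟩

theorem rearrangementSpan_eq_bot : rearrangementSpan n p (n + 1) = ⊥ :=
  Submodule.span_eq_bot.2 fun _ ⟨_, r, _, hm, _⟩ => absurd r.length_le (by omega)

variable {q r q' r' : Composition n}

theorem bel_wComposition_sub_mem {m : ℕ} {Z : Matrix (Fin q.length) (Fin r.length) ℕ}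
    {Z' : Matrix (Fin q'.length) (Fin r'.length) ℕ} (hZ : Z ∈ SMat q r) (hZ' : Z' ∈ SMat q' r')
    (h : (wList Z).Perm (wList Z')) (hm : m ≤ (wList Z').length) :
    Bel n p (wComposition n Z) - Bel n p (wComposition n Z') ∈ rearrangementSpan n p m := by
  refine bel_sub_bel_mem_rearrangementSpan ?_ ?_
  · rwa [wComposition_blocks (sum_wList_of_mem_SMat hZ),
      wComposition_blocks (sum_wList_of_mem_SMat hZ')]
  · rwa [← Composition.blocks_length, wComposition_blocks (sum_wList_of_mem_SMat hZ')]

theorem bel_commutator_mem_rearrangementSpan (hn : 0 < n) (q r : Composition n) :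
    Bel n p q * Bel n p r - Bel n p r * Bel n p q ∈ rearrangementSpan n p 1 := by
  rw [bel_mul_bel, bel_mul_bel]
  refine Submodule.sum_sub_sum_mem (Matrix.transposeAddEquiv _ _ ℕ).toEquiv (fun Z => ?_)
    fun Z hZ => ?_
  · simp [transpose_mem_SMat_iff]
  · rw [Set.Finite.mem_toFinset] at hZ
    have hZ' := transpose_mem_SMat_iff.2 hZ
    exact bel_wComposition_sub_mem hZ hZ' (wList_transpose_perm Z).symm
      ((q.length_pos_of_pos hn).trans_le (length_le_length_wList hZ'))

theorem bel_mul_sub_bel_mul_mem (hn : 0 < n) (s : Composition n) (h : q.blocks.Perm q'.blocks) :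
    Bel n p s * Bel n p q - Bel n p s * Bel n p q' ∈ rearrangementSpan n p 1 := by
  obtain ⟨e, he⟩ := Composition.exists_blocksFun_equiv_of_perm h
  rw [bel_mul_bel, bel_mul_bel]
  refine Submodule.sum_sub_sum_mem (Matrix.reindex e.symm (Equiv.refl _)) (fun Z => ?_)
    fun Z hZ => ?_
  · simpa using (submatrix_mem_SMat_iff (Z := Z) e he (Equiv.refl _) fun _ => rfl).symm
  · rw [Set.Finite.mem_toFinset] at hZ
    have hZ' : Matrix.reindex e.symm (Equiv.refl _) Z ∈ SMat q' s :=
      (submatrix_mem_SMat_iff e he (Equiv.refl _) fun _ => rfl).2 hZ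
    exact bel_wComposition_sub_mem hZ hZ' (wList_submatrix_perm Z e (Equiv.refl _)).symm
      ((q'.length_pos_of_pos hn).trans_le (length_le_length_wList hZ'))

theorem mul_bel_sub_mul_bel_mem (h : q.blocks.Perm q'.blocks) (r : Composition n) :
    Bel n p q * Bel n p r - Bel n p q' * Bel n p r ∈ rearrangementSpan n p (r.length + 1) := by
  obtain ⟨e, he⟩ := Composition.exists_blocksFun_equiv_of_perm h
  rw [bel_mul_bel, bel_mul_bel]
  refine Submodule.sum_sub_sum_mem (Matrix.reindex (Equiv.refl _) e.symm) (fun Z => ?_)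
    fun Z hZ => ?_
  · simpa using (submatrix_mem_SMat_iff (Z := Z) (Equiv.refl _) (fun _ => rfl) e he).symm
  · rw [Set.Finite.mem_toFinset] at hZ
    have hZ' : Matrix.reindex (Equiv.refl _) e.symm Z ∈ SMat r q' :=
      (submatrix_mem_SMat_iff (Equiv.refl _) (fun _ => rfl) e he).2 hZ
    have hperm : (wList Z).Perm (wList (Matrix.reindex (Equiv.refl _) e.symm Z)) :=
      (wList_submatrix_perm Z (Equiv.refl _) e).symm
    -- a reading word of length `r.length` comes from one nonzero entry per row, so it is `r`
    rcases (length_le_length_wList hZ).eq_or_lt with hlen | hlen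
    · rw [wComposition_eq_of_length_eq hZ hlen.symm,
        wComposition_eq_of_length_eq hZ' (hperm.length_eq ▸ hlen.symm), sub_self]
      exact zero_mem _
    · exact bel_wComposition_sub_mem hZ hZ' hperm (hperm.length_eq ▸ hlen)

end Rearrangements

theorem Ideal.mem_jacobson_bot_of_forall_isNilpotent_mul {R : Type*} [Ring R] {x : R}
    (h : ∀ y, IsNilpotent (y * x)) : x ∈ (⊥ : Ideal R).jacobson := by
  refine Ideal.mem_jacobson_iff.2 fun y => ?_
  obtain ⟨z, hz⟩ := (h y).isUnit_add_one.exists_left_inv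
  exact ⟨z, by rw [Submodule.mem_bot, ← hz]; noncomm_ring⟩

section DescentSpan

open scoped Pointwise

variable {n p : ℕ}

theorem bel_single (hn : 0 < n) : Bel n p (Composition.single n hn) = 1 := by
  set c := Composition.single n hn
  have hidx (v w : Fin n) : c.index v = c.index w := by
    have := (c.index v).2
    have := (c.index w).2
    simp only [c, Composition.single_length] at *
    omega
  have hfilter :
      ({σ | descSet σ ⊆ properPartialSums c} : Finset (Equiv.Perm (Fin n))) = {1} := by
    ext σ
    simp only [mem_filter, mem_univ, true_and, mem_singleton, descSet_subset_properPartialSums_iff]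
    refine ⟨fun h => Equiv.ext fun v => DFunLike.congr_fun
      (Subsingleton.elim (StrictMono.orderIsoOfSurjective σ (fun v w hvw => h v w hvw (hidx v w))
        σ.surjective) (OrderIso.refl _)) v, ?_⟩
    rintro rfl v w hvw -
    exact hvw
  rw [Bel, hfilter, sum_singleton, map_one]

def descentSpan (n p : ℕ) : Submodule (ZMod p) (GroupAlg n p) :=
  Submodule.span (ZMod p) (Set.range (Bel n p))

theorem mem_descentSpan_of_mem_descentAlgebra (hn : 0 < n) {x : GroupAlg n p}
    (hx : x ∈ descentAlgebra n p) : x ∈ descentSpan n p := by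
  have hmul : descentSpan n p * descentSpan n p ≤ descentSpan n p := by
    rw [descentSpan, Submodule.span_mul_span, Submodule.span_le]
    rintro _ ⟨_, ⟨q, rfl⟩, _, ⟨r, rfl⟩, rfl⟩
    change Bel n p q * Bel n p r ∈ _
    rw [bel_mul_bel]
    exact Submodule.sum_mem _ fun Z _ => Submodule.subset_span ⟨_, rfl⟩
  have hone : (1 : GroupAlg n p) ∈ descentSpan n p :=
    bel_single (p := p) hn ▸ Submodule.subset_span ⟨_, rfl⟩
  refine Algebra.adjoin_le (S := (descentSpan n p).toSubalgebra hone
    fun _ _ hx hy => hmul (Submodule.mul_mem_mul hx hy)) ?_ hx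
  rintro _ ⟨q, rfl⟩
  exact Submodule.subset_span ⟨q, rfl⟩

theorem commutator_mem_rearrangementSpan (hn : 0 < n) {x y : GroupAlg n p}
    (hx : x ∈ descentSpan n p) (hy : y ∈ descentSpan n p) :
    x * y - y * x ∈ rearrangementSpan n p 1 := by
  let commutator := LinearMap.mul (ZMod p) (GroupAlg n p) - (LinearMap.mul (ZMod p) _).flip
  have hle : Submodule.map₂ commutator (descentSpan n p) (descentSpan n p) ≤
      rearrangementSpan n p 1 := by
    rw [descentSpan, Submodule.map₂_span_span, Submodule.span_le]
    rintro _ ⟨_, ⟨q, rfl⟩, _, ⟨r, rfl⟩, rfl⟩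
    exact bel_commutator_mem_rearrangementSpan hn q r
  simpa [commutator] using hle (Submodule.apply_mem_map₂ commutator hx hy)

theorem descentSpan_mul_rearrangementSpan_le (hn : 0 < n) :
    descentSpan n p * rearrangementSpan n p 1 ≤ rearrangementSpan n p 1 := by
  rw [descentSpan, rearrangementSpan, Submodule.span_mul_span, Submodule.span_le]
  rintro _ ⟨_, ⟨s, rfl⟩, _, ⟨q, q', h, -, rfl⟩, rfl⟩
  change Bel n p s * (Bel n p q - Bel n p q') ∈ _
  rw [mul_sub]
  exact bel_mul_sub_bel_mul_mem hn s h

theorem rearrangementSpan_one_mul_le (k : ℕ) :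
    rearrangementSpan n p 1 * rearrangementSpan n p k ≤ rearrangementSpan n p (k + 1) := by
  rw [rearrangementSpan, rearrangementSpan, Submodule.span_mul_span, Submodule.span_le]
  rintro _ ⟨_, ⟨q, q', h, -, rfl⟩, _, ⟨r, r', h', hk, rfl⟩, rfl⟩
  have hlen : r.length = r'.length := by
    rw [← Composition.blocks_length, ← Composition.blocks_length, h'.length_eq]
  have hsplit : (Bel n p q - Bel n p q') * (Bel n p r - Bel n p r') =
      (Bel n p q * Bel n p r - Bel n p q' * Bel n p r) -
        (Bel n p q * Bel n p r' - Bel n p q' * Bel n p r') := by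
    noncomm_ring
  change (Bel n p q - Bel n p q') * (Bel n p r - Bel n p r') ∈ _
  rw [hsplit]
  exact Submodule.sub_mem _ (rearrangementSpan_antitone (by omega) (mul_bel_sub_mul_bel_mem h r))
    (rearrangementSpan_antitone (by omega) (mul_bel_sub_mul_bel_mem h r'))

theorem isNilpotent_of_mem_rearrangementSpan {u : GroupAlg n p}
    (hu : u ∈ rearrangementSpan n p 1) : IsNilpotent u := by
  have hpow (k : ℕ) : u ^ (k + 1) ∈ rearrangementSpan n p (k + 1) := by
    induction k with
    | zero => simpa using hu
    | succ k ih => exact pow_succ' u (k + 1) ▸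
        rearrangementSpan_one_mul_le (k + 1) (Submodule.mul_mem_mul hu ih)
  exact ⟨n + 1, by simpa [rearrangementSpan_eq_bot] using hpow n⟩

end DescentSpan

theorem stmt6_general (n p : ℕ) (hn : 1 ≤ n) :
    ∀ x y : descentAlgebra n p, x * y - y * x ∈ descentRadical n p := by
  intro x y
  have hspan (z : descentAlgebra n p) : (z : GroupAlg n p) ∈ descentSpan n p :=
    mem_descentSpan_of_mem_descentAlgebra hn z.2
  refine Ideal.mem_jacobson_bot_of_forall_isNilpotent_mul fun c => ?_
  rw [← IsNilpotent.map_iff (f := (descentAlgebra n p).val) Subtype.val_injective]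
  refine isNilpotent_of_mem_rearrangementSpan (descentSpan_mul_rearrangementSpan_le hn ?_)
  simpa using Submodule.mul_mem_mul (hspan c)
    (commutator_mem_rearrangementSpan hn (hspan x) (hspan y))

/-- `Σ(n,p)/R(n,p)` is commutative: every commutator `xy - yx` lies in the
Jacobson radical `R(n,p)`. -/
theorem stmt6 (n p : ℕ) (hn : 1 ≤ n) (hp : p.Prime) :
    ∀ x y : descentAlgebra n p, x * y - y * x ∈ descentRadical n p :=
  stmt6_general n p hn

end
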